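/- In the SEIR model, I(t) → 0 as t → ∞. -/

import Mathlib

open Filter Topology Set

/-!
Along solutions, `S + E + I` and `S + E` are nonincreasing (their derivatives are `-μ I` and
`-γ E`) and nonnegative, so both converge, and hence so does their difference `I`, to some
`L ≥ 0`. Since `R' = μ I`, a positive limit would make `R` grow at least linearly, which is
impossible for the bounded `R`.
-/

section RealFunctions

variable {f f' : ℝ → ℝ} {a : ℝ}

lemma monotoneOn_Ici_of_hasDerivAt_nonneg (hf : ∀ t, a ≤ t → HasDerivAt f (f' t) t)
    (hf' : ∀ t, a ≤ t → 0 ≤ f' t) : MonotoneOn f (Ici a) :=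
  monotoneOn_of_hasDerivWithinAt_nonneg (convex_Ici a)
    (fun t ht => (hf t ht).continuousAt.continuousWithinAt)
    (fun t ht => (hf t (interior_Ici.subset ht).le).hasDerivWithinAt)
    (fun t ht => hf' t (interior_Ici.subset ht).le)

lemma antitoneOn_Ici_of_hasDerivAt_nonpos (hf : ∀ t, a ≤ t → HasDerivAt f (f' t) t)
    (hf' : ∀ t, a ≤ t → f' t ≤ 0) : AntitoneOn f (Ici a) :=
  antitoneOn_of_hasDerivWithinAt_nonpos (convex_Ici a)
    (fun t ht => (hf t ht).continuousAt.continuousWithinAt)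
    (fun t ht => (hf t (interior_Ici.subset ht).le).hasDerivWithinAt)
    (fun t ht => hf' t (interior_Ici.subset ht).le)

lemma AntitoneOn.exists_tendsto_atTop_of_Ici (hf : AntitoneOn f (Ici a))
    (hb : BddBelow (f '' Ici a)) : ∃ l, Tendsto f atTop (𝓝 l) := by
  set g : ℝ → ℝ := fun t => f (max t a)
  have hg : Antitone g := fun s t hst =>
    hf (le_max_right s a) (le_max_right t a) (max_le_max hst le_rfl)
  have hgb : BddBelow (range g) :=
    hb.mono (range_subset_iff.2 fun t => mem_image_of_mem f (le_max_right t a))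
  refine ⟨⨅ t, g t, (tendsto_atTop_ciInf hg hgb).congr' ?_⟩
  filter_upwards [eventually_ge_atTop a] with t ht
  simp only [g, max_eq_left ht]

lemma exists_tendsto_of_hasDerivAt_nonpos {m : ℝ} (hf : ∀ t, a ≤ t → HasDerivAt f (f' t) t)
    (hf' : ∀ t, a ≤ t → f' t ≤ 0) (hm : ∀ t, a ≤ t → m ≤ f t) :
    ∃ l, Tendsto f atTop (𝓝 l) :=
  (antitoneOn_Ici_of_hasDerivAt_nonpos hf hf').exists_tendsto_atTop_of_Ici
    ⟨m, forall_mem_image.2 hm⟩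

lemma tendsto_atTop_of_hasDerivAt_ge {c : ℝ} (hc : 0 < c)
    (hf : ∀ t, a ≤ t → HasDerivAt f (f' t) t) (hf' : ∀ t, a ≤ t → c ≤ f' t) :
    Tendsto f atTop atTop := by
  have hmono : MonotoneOn (fun t => f t - c * t) (Ici a) :=
    monotoneOn_Ici_of_hasDerivAt_nonneg
      (fun t ht => (hf t ht).sub ((hasDerivAt_id t).const_mul c))
      (fun t ht => by simpa using hf' t ht)
  have hlin : Tendsto (fun t => f a - c * a + c * t) atTop atTop :=
    tendsto_atTop_add_const_left _ _ (tendsto_id.const_mul_atTop hc)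
  refine tendsto_atTop_mono' _ ?_ hlin
  filter_upwards [eventually_ge_atTop a] with t ht
  linarith [hmono self_mem_Ici (mem_Ici.2 ht) ht]

lemma nonpos_of_tendsto_deriv_of_bddAbove {L M : ℝ} (hf : ∀ t, a ≤ t → HasDerivAt f (f' t) t)
    (hf'L : Tendsto f' atTop (𝓝 L)) (hM : ∀ t, a ≤ t → f t ≤ M) : L ≤ 0 := by
  by_contra! hL
  obtain ⟨T, hT⟩ := eventually_atTop.1
    ((hf'L.eventually (lt_mem_nhds (half_lt_self hL))).and (eventually_ge_atTop a))
  have hTa : a ≤ T := (hT T le_rfl).2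
  have hf_top : Tendsto f atTop atTop :=
    tendsto_atTop_of_hasDerivAt_ge (half_pos hL) (fun t ht => hf t (hTa.trans ht))
      (fun t ht => (hT t ht).1.le)
  obtain ⟨t, hMt, hat⟩ :=
    ((hf_top.eventually_gt_atTop M).and (eventually_ge_atTop a)).exists
  exact (hM t hat).not_gt hMt

end RealFunctions

theorem seir_I_tendsto_zero_general
    (β γ μ N : ℝ) (hγ : 0 < γ) (hμ : 0 < μ)
    (S E I R : ℝ → ℝ)
    (hS : ∀ t, 0 ≤ t → HasDerivAt S (-β * S t * I t) t)
    (hE : ∀ t, 0 ≤ t → HasDerivAt E (β * S t * I t - γ * E t) t)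
    (hI : ∀ t, 0 ≤ t → HasDerivAt I (γ * E t - μ * I t) t)
    (hR : ∀ t, 0 ≤ t → HasDerivAt R (μ * I t) t)
    (hSnn : ∀ t, 0 ≤ t → 0 ≤ S t ∧ S t ≤ N)
    (hEnn : ∀ t, 0 ≤ t → 0 ≤ E t ∧ E t ≤ N)
    (hInn : ∀ t, 0 ≤ t → 0 ≤ I t ∧ I t ≤ N)
    (hRnn : ∀ t, 0 ≤ t → 0 ≤ R t ∧ R t ≤ N) :
    Tendsto I atTop (𝓝 0) := by
  obtain ⟨l₁, hl₁⟩ : ∃ l, Tendsto (fun t => S t + E t + I t) atTop (𝓝 l) :=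
    exists_tendsto_of_hasDerivAt_nonpos (f' := fun t => -(μ * I t)) (m := 0)
      (fun t ht => (((hS t ht).add (hE t ht)).add (hI t ht)).congr_deriv (by ring))
      (fun t ht => neg_nonpos.2 (mul_nonneg hμ.le (hInn t ht).1))
      (fun t ht => by linarith [(hSnn t ht).1, (hEnn t ht).1, (hInn t ht).1])
  obtain ⟨l₂, hl₂⟩ : ∃ l, Tendsto (fun t => S t + E t) atTop (𝓝 l) :=
    exists_tendsto_of_hasDerivAt_nonpos (f' := fun t => -(γ * E t)) (m := 0)
      (fun t ht => ((hS t ht).add (hE t ht)).congr_deriv (by ring))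
      (fun t ht => neg_nonpos.2 (mul_nonneg hγ.le (hEnn t ht).1))
      (fun t ht => by linarith [(hSnn t ht).1, (hEnn t ht).1])
  have hIL : Tendsto I atTop (𝓝 (l₁ - l₂)) := (hl₁.sub hl₂).congr fun t => by ring
  have hL_nonneg : 0 ≤ l₁ - l₂ :=
    ge_of_tendsto hIL ((eventually_ge_atTop 0).mono fun t ht => (hInn t ht).1)
  have hμL_nonpos : μ * (l₁ - l₂) ≤ 0 :=
    nonpos_of_tendsto_deriv_of_bddAbove hR (hIL.const_mul μ) fun t ht => (hRnn t ht).2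
  rwa [le_antisymm (nonpos_of_mul_nonpos_right hμL_nonpos hμ) hL_nonneg] at hIL

theorem seir_I_tendsto_zero
    (β γ μ N : ℝ) (hβ : 0 < β) (hγ : 0 < γ) (hμ : 0 < μ)
    (S E I R : ℝ → ℝ)
    (hS : ∀ t, 0 ≤ t → HasDerivAt S (-β * S t * I t) t)
    (hE : ∀ t, 0 ≤ t → HasDerivAt E (β * S t * I t - γ * E t) t)
    (hI : ∀ t, 0 ≤ t → HasDerivAt I (γ * E t - μ * I t) t)
    (hR : ∀ t, 0 ≤ t → HasDerivAt R (μ * I t) t)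
    (hS0 : 0 < S 0) (hE0 : 0 ≤ E 0) (hI0 : 0 < I 0) (hR0 : R 0 = 0)
    (hN : N = S 0 + E 0 + I 0)
    (hSnn : ∀ t, 0 ≤ t → 0 ≤ S t ∧ S t ≤ N)
    (hEnn : ∀ t, 0 ≤ t → 0 ≤ E t ∧ E t ≤ N)
    (hInn : ∀ t, 0 ≤ t → 0 ≤ I t ∧ I t ≤ N)
    (hRnn : ∀ t, 0 ≤ t → 0 ≤ R t ∧ R t ≤ N) :
    Tendsto I atTop (𝓝 0) :=
  seir_I_tendsto_zero_general β γ μ N hγ hμ S E I R hS hE hI hR hSnn hEnn hInn hRnn
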